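/- arXiv:2507.02305 — 4 statements merged into one kernel-verified Lean document; each statement's English description precedes it below -/
import Mathlib

section
/- Let B, N > 0 and C > R be real constants with C − R > e^{−3}/(2 ln 2). Then the function Φ(x) = ((C − R)·B·N·x + (1/2)·log₂(B·N·x)) / (log₂ e · √(B·N·x)) is strictly increasing on (0, ∞). -/
/-! Substituting `t = √(B N x)` turns `Φ` into `g(t) = k t + log t / t` with `k = (C − R) log 2`.
Since `g'(t) = (k t² + 1 − log t) / t²` and `log t ≤ 1 + (e⁻³/2) t²` for all `t > 0` (with equality
at `t = e^{3/2}`), the hypothesis `k > e⁻³/2` makes `g` strictly increasing, and so is `Φ` as the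
composition of `g` with the increasing map `x ↦ √(B N x)`. -/

open Real Set

lemma Real.log_le_one_add_exp_neg_three_div_two_mul_sq {t : ℝ} (ht : 0 < t) :
    log t ≤ 1 + exp (-3) / 2 * t ^ 2 := by
  set s := t * exp (-3 / 2)
  have hs : log s = log t - 3 / 2 := by
    rw [log_mul ht.ne' (exp_pos _).ne', log_exp]; ring
  have hs2 : s ^ 2 = exp (-3) * t ^ 2 := by
    rw [mul_pow, ← exp_nat_mul]; norm_num; ring
  -- `log s ≤ s − 1` at `s = t e^{-3/2}`, followed by `s ≤ (s² + 1) / 2`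
  nlinarith [log_le_sub_one_of_pos (show 0 < s by positivity), sq_nonneg (s - 1)]

lemma strictMonoOn_mul_add_log_div {k : ℝ} (hk : exp (-3) / 2 < k) :
    StrictMonoOn (fun t => k * t + log t / t) (Ioi 0) := by
  refine strictMonoOn_of_deriv_pos (convex_Ioi 0) ?_ ?_
  · exact (continuousOn_id.const_smul k).add <|
      (continuousOn_log.mono fun _ ht => (mem_Ioi.mp ht).ne').div continuousOn_id
        fun _ ht => (mem_Ioi.mp ht).ne'
  · intro t ht
    rw [interior_Ioi, mem_Ioi] at ht
    have hderiv : HasDerivAt (fun t => k * t + log t / t)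
        (k * 1 + (t⁻¹ * t - log t * 1) / t ^ 2) t :=
      ((hasDerivAt_id t).const_mul k).add
        ((hasDerivAt_log ht.ne').div (hasDerivAt_id t) ht.ne')
    have hnum : 0 < k * t ^ 2 + 1 - log t := by
      nlinarith [log_le_one_add_exp_neg_three_div_two_mul_sq ht, sq_pos_of_pos ht]
    rw [hderiv.deriv, show k * 1 + (t⁻¹ * t - log t * 1) / t ^ 2
      = (k * t ^ 2 + 1 - log t) / t ^ 2 by field_simp; ring]
    positivity

lemma mul_add_half_logb_div_eq {y : ℝ} (hy : 0 < y) (a : ℝ) :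
    (a * y + 1 / 2 * logb 2 y) / (logb 2 (exp 1) * √y) = a * log 2 * √y + log √y / √y := by
  have hy_sq : a * y = a * √y * √y := by rw [mul_assoc, mul_self_sqrt hy.le]
  rw [← log_div_log, ← log_div_log, log_exp, log_sqrt hy.le, hy_sq]
  field_simp

theorem stmt_1_general (B N C R : ℝ) (hB : 0 < B) (hN : 0 < N)
    (h : Real.exp (-3) / (2 * Real.log 2) < C - R) :
    StrictMonoOn
      (fun x : ℝ =>
        ((C - R) * B * N * x + (1 / 2) * Real.logb 2 (B * N * x)) /
          (Real.logb 2 (Real.exp 1) * Real.sqrt (B * N * x)))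
      (Set.Ioi 0) := by
  have hBN : 0 < B * N := mul_pos hB hN
  have hk : exp (-3) / 2 < (C - R) * log 2 := by
    have := (div_lt_iff₀ (mul_pos two_pos (log_pos one_lt_two))).mp h
    linarith
  have hsqrt_mono : StrictMonoOn (fun x => √(B * N * x)) (Ioi 0) := fun x hx _ _ hxy =>
    sqrt_lt_sqrt (mul_pos hBN hx).le (mul_lt_mul_of_pos_left hxy hBN)
  have hsqrt_maps : MapsTo (fun x => √(B * N * x)) (Ioi 0) (Ioi 0) := fun x hx =>
    sqrt_pos.mpr (mul_pos hBN hx)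
  refine ((strictMonoOn_mul_add_log_div hk).comp hsqrt_mono hsqrt_maps).congr fun x hx => ?_
  have hy : 0 < B * N * x := mul_pos hBN hx
  rw [Function.comp_apply, ← mul_add_half_logb_div_eq hy]
  congr 2; ring

/-- If `B, N > 0` and `C − R > e^{−3}/(2 ln 2)`, then
`Φ(x) = ((C−R)·B·N·x + (1/2)·log₂(B·N·x)) / (log₂ e · √(B·N·x))`
is strictly increasing on `(0, ∞)`. -/
theorem stmt_1 (B N C R : ℝ) (hB : 0 < B) (hN : 0 < N) (hCR : R < C)
    (h : Real.exp (-3) / (2 * Real.log 2) < C - R) :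
    StrictMonoOn
      (fun x : ℝ =>
        ((C - R) * B * N * x + (1 / 2) * Real.logb 2 (B * N * x)) /
          (Real.logb 2 (Real.exp 1) * Real.sqrt (B * N * x)))
      (Set.Ioi 0) :=
  stmt_1_general B N C R hB hN h
end

section
/- Let K ≥ 1 be a natural number, D > 0, and let X₁, …, X_K be independent real random variables on a probability space, each distributed with probability density x ↦ 2x/D² on the interval [0, D] (so P(Xᵢ ≤ x) = x²/D² for x ∈ [0, D]). Then for every c with 0 < c ≤ D^K, P(∏_{i=1}^K Xᵢ ≥ c) ≥ (1 − c^{2/K}/D²)^K. -/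
/-! With `t = c ^ (1/K)`, the event `∀ i, t ≤ Xᵢ` forces `c = t ^ K ≤ ∏ Xᵢ`. By independence it
has probability `∏ P(t ≤ Xᵢ)`, and each factor is at least
`1 - P(Xᵢ ≤ t) = 1 - t² / D² = 1 - c^(2/K) / D²`. -/

open MeasureTheory ProbabilityTheory

namespace ProbabilityTheory

variable {Ω ι : Type*} [MeasurableSpace Ω] {μ : Measure Ω}

theorem iIndepFun.prod_measureReal_le_measureReal_prod_le [Fintype ι] [IsFiniteMeasure μ]
    {X : ι → Ω → ℝ} (hX : iIndepFun X μ) {t : ι → ℝ} (ht : ∀ i, 0 ≤ t i) :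
    ∏ i, μ.real {ω | t i ≤ X i ω} ≤ μ.real {ω | ∏ i, t i ≤ ∏ i, X i ω} := by
  have hprod : μ.real (⋂ i, {ω | t i ≤ X i ω}) = ∏ i, μ.real {ω | t i ≤ X i ω} := by
    rw [measureReal_def, hX.meas_iInter (s := fun i ↦ {ω | t i ≤ X i ω})
      fun i ↦ ⟨Set.Ici (t i), measurableSet_Ici, rfl⟩, ENNReal.toReal_prod]
    rfl
  rw [← hprod]
  refine measureReal_mono fun ω hω ↦ ?_
  simp only [Set.mem_iInter, Set.mem_ofPred_eq] at hω ⊢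
  exact Finset.prod_le_prod (fun i _ ↦ ht i) fun i _ ↦ hω i

theorem one_sub_measureReal_le_le_measureReal_ge [IsProbabilityMeasure μ] (f : Ω → ℝ) (t : ℝ) :
    1 - μ.real {ω | f ω ≤ t} ≤ μ.real {ω | t ≤ f ω} := by
  have hcover : Set.univ ⊆ {ω | f ω ≤ t} ∪ {ω | t ≤ f ω} := fun ω _ ↦ le_total (f ω) t
  have := (measureReal_mono (μ := μ) hcover).trans (measureReal_union_le _ _)
  rw [probReal_univ] at this
  linarith

end ProbabilityTheory

theorem stmt_8_general {Ω : Type*} [MeasureSpace Ω] [IsProbabilityMeasure (ℙ : Measure Ω)]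
    (K : ℕ) (hK : 1 ≤ K) (D : ℝ) (hD : 0 < D)
    (X : Fin K → Ω → ℝ)
    (hindep : iIndepFun X ℙ)
    (hcdf : ∀ i, ∀ x ∈ Set.Icc (0:ℝ) D, (ℙ {ω | X i ω ≤ x}).toReal = x ^ 2 / D ^ 2)
    (c : ℝ) (hc : 0 < c) (hcD : c ≤ D ^ K) :
    (1 - c ^ ((2:ℝ) / K) / D ^ 2) ^ K ≤ (ℙ {ω | c ≤ ∏ i, X i ω}).toReal := by
  have hK0 : K ≠ 0 := by omega
  set t := c ^ ((K : ℝ)⁻¹)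
  have ht0 : 0 ≤ t := by positivity
  have htK : t ^ K = c := Real.rpow_inv_natCast_pow hc.le hK0
  have ht2 : c ^ ((2:ℝ) / K) = t ^ 2 := by
    rw [div_eq_inv_mul, ← Real.rpow_mul_natCast hc.le]; norm_num
  have htD : t ≤ D := (pow_le_pow_iff_left₀ ht0 hD.le hK0).mp (htK ▸ hcD)
  have hp0 : 0 ≤ 1 - t ^ 2 / D ^ 2 := by
    rw [sub_nonneg, div_le_one (by positivity)]
    exact pow_le_pow_left₀ ht0 htD 2
  have htail : ∀ i, 1 - t ^ 2 / D ^ 2 ≤ (ℙ : Measure Ω).real {ω | t ≤ X i ω} := fun i ↦ by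
    simpa [measureReal_def, hcdf i t ⟨ht0, htD⟩]
      using one_sub_measureReal_le_le_measureReal_ge (μ := ℙ) (X i) t
  calc (1 - c ^ ((2:ℝ) / K) / D ^ 2) ^ K = ∏ _ : Fin K, (1 - t ^ 2 / D ^ 2) := by
        rw [ht2, Fin.prod_const]
    _ ≤ ∏ i, (ℙ : Measure Ω).real {ω | t ≤ X i ω} :=
        Finset.prod_le_prod (fun _ _ ↦ hp0) fun i _ ↦ htail i
    _ ≤ (ℙ : Measure Ω).real {ω | ∏ _ : Fin K, t ≤ ∏ i, X i ω} :=
        hindep.prod_measureReal_le_measureReal_prod_le fun _ ↦ ht0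
    _ = (ℙ {ω | c ≤ ∏ i, X i ω}).toReal := by rw [Fin.prod_const, htK, measureReal_def]

/-- Lower-bound half of Corollary 1 of the paper: if `X₁, …, X_K` are i.i.d.
with density `2x/D²` on `[0, D]` (so `P(Xᵢ ≤ x) = x²/D²` for `x ∈ [0, D]`),
then for `0 < c ≤ D^K`, `P(∏ Xᵢ ≥ c) ≥ (1 − c^{2/K}/D²)^K`. -/
theorem stmt_8 {Ω : Type*} [MeasureSpace Ω] [IsProbabilityMeasure (ℙ : Measure Ω)]
    (K : ℕ) (hK : 1 ≤ K) (D : ℝ) (hD : 0 < D)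
    (X : Fin K → Ω → ℝ) (hmeas : ∀ i, Measurable (X i))
    (hindep : iIndepFun X ℙ)
    (hcdf : ∀ i, ∀ x ∈ Set.Icc (0:ℝ) D, (ℙ {ω | X i ω ≤ x}).toReal = x ^ 2 / D ^ 2)
    (c : ℝ) (hc : 0 < c) (hcD : c ≤ D ^ K) :
    (1 - c ^ ((2:ℝ) / K) / D ^ 2) ^ K ≤ (ℙ {ω | c ≤ ∏ i, X i ω}).toReal :=
  stmt_8_general K hK D hD X hindep hcdf c hc hcD
end

section
/- Let K ≥ 1 be a natural number, D > 0, and let X₁, …, X_K be independent real random variables on a probability space, each distributed with probability density x ↦ 2x/D² on the interval [0, D] (so P(Xᵢ ≤ x) = x²/D² for x ∈ [0, D]). Then for every c with 0 < c ≤ D^K, P(∏_{i=1}^K Xᵢ ≥ c) ≤ 1 − (c^{2/K}/D²)^K. -/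
open MeasureTheory ProbabilityTheory

/-!
The `Xᵢ` are almost surely nonnegative, since `P(Xᵢ ≤ 0) = 0`. If all `Xᵢ ≤ s` with
`s < t := c^{1/K}`, then `∏ Xᵢ ≤ s^K < c`. Hence `{c ≤ ∏ Xᵢ}` lies, up to a null set, in the
complement of `⋂ᵢ {Xᵢ ≤ s}`, whose probability is `(s²/D²)^K` by independence. Letting `s ↑ t`
gives the bound, since `t² = c^{2/K}`.
-/

open Filter Set Topology

lemma Finset.prod_le_pow_card_of_nonneg {ι : Type*} (s : Finset ι) {f : ι → ℝ} {b : ℝ}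
    (h0 : ∀ i ∈ s, 0 ≤ f i) (hb : ∀ i ∈ s, f i ≤ b) : ∏ i ∈ s, f i ≤ b ^ s.card := by
  simpa using Finset.prod_le_prod h0 hb

section Probability

variable {Ω ι : Type*} [MeasurableSpace Ω] {μ : Measure Ω} [IsProbabilityMeasure μ]
  [Fintype ι] {X : ι → Ω → ℝ}

lemma measureReal_le_prod_le_one_sub_prod (hmeas : ∀ i, Measurable (X i))
    (hindep : iIndepFun X μ) (hnonneg : ∀ i, ∀ᵐ ω ∂μ, 0 ≤ X i ω) {s c : ℝ}
    (hsc : s ^ Fintype.card ι < c) :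
    μ.real {ω | c ≤ ∏ i, X i ω} ≤ 1 - ∏ i, μ.real {ω | X i ω ≤ s} := by
  have hsub : {ω | c ≤ ∏ i, X i ω} ≤ᵐ[μ] (⋂ i, {ω | X i ω ≤ s})ᶜ := by
    filter_upwards [ae_all_iff.2 hnonneg] with ω hω hc hω_le
    have hle : ∀ i, X i ω ≤ s := by simpa using (show ω ∈ ⋂ i, {ω | X i ω ≤ s} from hω_le)
    exact (Finset.prod_le_pow_card_of_nonneg _ (fun i _ ↦ hω i) (fun i _ ↦ hle i)).not_gt
      (hsc.trans_le hc)
  have hinter : μ (⋂ i, {ω | X i ω ≤ s}) = ∏ i, μ {ω | X i ω ≤ s} :=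
    hindep.meas_iInter fun i ↦ ⟨Iic s, measurableSet_Iic, rfl⟩
  calc μ.real {ω | c ≤ ∏ i, X i ω} ≤ μ.real (⋂ i, {ω | X i ω ≤ s})ᶜ :=
        ENNReal.toReal_mono (measure_ne_top _ _) (measure_mono_ae hsub)
    _ = 1 - ∏ i, μ.real {ω | X i ω ≤ s} := by
      rw [probReal_compl_eq_one_sub (.iInter fun i ↦ measurableSet_le (hmeas i) measurable_const),
        measureReal_def, hinter, ENNReal.toReal_prod]
      rfl

end Probability

/-- Upper-bound half of Corollary 1 of the paper: if `X₁, …, X_K` are i.i.d.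
with density `2x/D²` on `[0, D]` (so `P(Xᵢ ≤ x) = x²/D²` for `x ∈ [0, D]`),
then for `0 < c ≤ D^K`, `P(∏ Xᵢ ≥ c) ≤ 1 − (c^{2/K}/D²)^K`. -/
theorem stmt_9 {Ω : Type*} [MeasureSpace Ω] [IsProbabilityMeasure (ℙ : Measure Ω)]
    (K : ℕ) (hK : 1 ≤ K) (D : ℝ) (hD : 0 < D)
    (X : Fin K → Ω → ℝ) (hmeas : ∀ i, Measurable (X i))
    (hindep : iIndepFun X ℙ)
    (hcdf : ∀ i, ∀ x ∈ Set.Icc (0:ℝ) D, (ℙ {ω | X i ω ≤ x}).toReal = x ^ 2 / D ^ 2)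
    (c : ℝ) (hc : 0 < c) (hcD : c ≤ D ^ K) :
    (ℙ {ω | c ≤ ∏ i, X i ω}).toReal ≤ 1 - (c ^ ((2:ℝ) / K) / D ^ 2) ^ K := by
  have hK0 : K ≠ 0 := by omega
  set t := c ^ ((K : ℝ)⁻¹)
  have htK : t ^ K = c := Real.rpow_inv_natCast_pow hc.le hK0
  have ht2 : t ^ 2 = c ^ ((2:ℝ) / K) := by
    rw [← Real.rpow_natCast, ← Real.rpow_mul hc.le, div_eq_inv_mul]
    norm_num
  have ht0 : 0 < t := by positivity
  have htD : t ≤ D := (pow_le_pow_iff_left₀ ht0.le hD.le hK0).1 (htK ▸ hcD)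
  have hnonneg : ∀ i, ∀ᵐ ω ∂ℙ, 0 ≤ X i ω := fun i ↦ by
    have h0 : ℙ {ω | X i ω ≤ 0} = 0 := by
      have := hcdf i 0 ⟨le_rfl, hD.le⟩
      simpa [ENNReal.toReal_eq_zero_iff, measure_ne_top] using this
    filter_upwards [measure_eq_zero_iff_ae_notMem.1 h0] with ω hω
    exact (not_le.1 hω).le
  have hbound : ∀ s ∈ Ioo 0 t, (ℙ {ω | c ≤ ∏ i, X i ω}).toReal ≤ 1 - (s ^ 2 / D ^ 2) ^ K := by
    rintro s ⟨hs0, hst⟩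
    have hsc : s ^ Fintype.card (Fin K) < c := by
      rw [Fintype.card_fin, ← htK]
      exact pow_lt_pow_left₀ hst hs0.le hK0
    have hcdf_s : ∀ i, (ℙ {ω | X i ω ≤ s}).toReal = s ^ 2 / D ^ 2 :=
      fun i ↦ hcdf i s ⟨hs0.le, hst.le.trans htD⟩
    simpa only [measureReal_def, hcdf_s, Finset.prod_const, Finset.card_univ,
      Fintype.card_fin] using measureReal_le_prod_le_one_sub_prod hmeas hindep hnonneg hsc
  have hcont : Continuous fun s : ℝ ↦ 1 - (s ^ 2 / D ^ 2) ^ K := by fun_prop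
  rw [← ht2]
  exact ge_of_tendsto (hcont.tendsto t |>.mono_left nhdsWithin_le_nhds)
    (eventually_of_mem (Ioo_mem_nhdsLT ht0) hbound)
end

section
/- Let V be a real inner product space, let R > 0 and h₁, h₂ ≥ 0, and let p, q ∈ V with ‖p‖ = R + h₁ and ‖q‖ = R + h₂. If every point of the closed segment joining p and q has norm at least R (i.e., the segment does not meet the open ball of radius R centered at the origin), then ‖p − q‖ ≤ √(h₁·(h₁ + 2R)) + √(h₂·(h₂ + 2R)). -/
/-!
Let `m` be the point of the segment `[p, q]` nearest to the origin. Since the segment is convex,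
`⟪m, x - m⟫ ≥ 0` for every `x` on it, so Pythagoras gives `‖x - m‖² ≤ ‖x‖² - ‖m‖²`. As
`‖m‖ ≥ R`, this bounds `‖p - m‖²` by `(R + h₁)² - R² = h₁ (h₁ + 2R)` and likewise `‖q - m‖²`;
the triangle inequality through `m` finishes.
-/

open RealInnerProductSpace

theorem exists_isMinOn_norm_segment {V : Type*} [NormedAddCommGroup V] [NormedSpace ℝ V]
    (p q : V) : ∃ m ∈ segment ℝ p q, IsMinOn norm (segment ℝ p q) m := by
  have hcompact : IsCompact (segment ℝ p q) := by
    rw [segment_eq_image']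
    exact isCompact_Icc.image (by fun_prop)
  exact hcompact.exists_isMinOn ⟨p, left_mem_segment ℝ p q⟩ continuous_norm.continuousOn

theorem sq_norm_sub_add_sq_norm_le_of_isMinOn {V : Type*} [NormedAddCommGroup V]
    [InnerProductSpace ℝ V] {K : Set V} (hK : Convex ℝ K) {m x : V} (hm : m ∈ K)
    (hmin : IsMinOn norm K m) (hx : x ∈ K) : ‖x - m‖ ^ 2 + ‖m‖ ^ 2 ≤ ‖x‖ ^ 2 := by
  have hproj : ‖0 - m‖ = ⨅ w : K, ‖0 - (w : V)‖ := by
    simpa only [zero_sub, norm_neg] using (hmin.iInf_eq hm).symm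
  have hangle : 0 ≤ ⟪m, x - m⟫ := by
    have := (norm_eq_iInf_iff_real_inner_le_zero hK hm).1 hproj x hx
    rwa [zero_sub, inner_neg_left, neg_nonpos] at this
  calc ‖x - m‖ ^ 2 + ‖m‖ ^ 2
      ≤ ‖m‖ ^ 2 + 2 * ⟪m, x - m⟫ + ‖x - m‖ ^ 2 := by linarith
    _ = ‖x‖ ^ 2 := by rw [← norm_add_sq_real, add_sub_cancel]

theorem stmt_11_general {V : Type*} [NormedAddCommGroup V] [InnerProductSpace ℝ V]
    (R h₁ h₂ : ℝ) (hR : 0 < R)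
    (p q : V) (hp : ‖p‖ = R + h₁) (hq : ‖q‖ = R + h₂)
    (hseg : ∀ x ∈ segment ℝ p q, R ≤ ‖x‖) :
    ‖p - q‖ ≤ Real.sqrt (h₁ * (h₁ + 2 * R)) + Real.sqrt (h₂ * (h₂ + 2 * R)) := by
  obtain ⟨m, hm, hmin⟩ := exists_isMinOn_norm_segment p q
  have hRm : R ^ 2 ≤ ‖m‖ ^ 2 := pow_le_pow_left₀ hR.le (hseg m hm) 2
  have hdist {x : V} {h : ℝ} (hx : x ∈ segment ℝ p q) (hxn : ‖x‖ = R + h) :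
      ‖x - m‖ ≤ Real.sqrt (h * (h + 2 * R)) := by
    apply Real.le_sqrt_of_sq_le
    have := sq_norm_sub_add_sq_norm_le_of_isMinOn (convex_segment p q) hm hmin hx
    rw [hxn] at this
    nlinarith
  calc ‖p - q‖ = ‖(p - m) - (q - m)‖ := by rw [sub_sub_sub_cancel_right]
    _ ≤ ‖p - m‖ + ‖q - m‖ := norm_sub_le _ _
    _ ≤ _ := add_le_add (hdist (left_mem_segment ℝ p q) hp) (hdist (right_mem_segment ℝ p q) hq)

/-- Maximum-visible-distance bound (Corollary 3 of the paper): if `‖p‖ = R + h₁`,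
`‖q‖ = R + h₂` and the segment joining `p` and `q` stays outside the open ball of
radius `R` around the origin, then
`‖p − q‖ ≤ √(h₁(h₁+2R)) + √(h₂(h₂+2R))`. -/
theorem stmt_11 {V : Type*} [NormedAddCommGroup V] [InnerProductSpace ℝ V]
    (R h₁ h₂ : ℝ) (hR : 0 < R) (hh₁ : 0 ≤ h₁) (hh₂ : 0 ≤ h₂)
    (p q : V) (hp : ‖p‖ = R + h₁) (hq : ‖q‖ = R + h₂)
    (hseg : ∀ x ∈ segment ℝ p q, R ≤ ‖x‖) :
    ‖p - q‖ ≤ Real.sqrt (h₁ * (h₁ + 2 * R)) + Real.sqrt (h₂ * (h₂ + 2 * R)) :=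
  stmt_11_general R h₁ h₂ hR p q hp hq hseg
end
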